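/- Fix an integer m ≥ 1 and two nonempty subsets C_r, C_{r'} ⊆ {1,…,m}; let Ω_r and Ω_{r'} be the corresponding centering matrices Ω_s := diag(1_{C_s}) − (1/|C_s|) 1_{C_s} 1_{C_s}^T. Let M ∈ ℝ^{m×m} be symmetric positive definite, let P_r, P_{r'} be the Moore–Penrose pseudoinverses of Ω_r M Ω_r and Ω_{r'} M Ω_{r'} respectively, and set E_r := P_r M, E_{r'} := P_{r'} M. If (1_h − 1_k)^T M (1_{h'} − 1_{k'}) = 0 for all h, k ∈ C_r and all h', k' ∈ C_{r'}, then E_r E_{r'} = 0. -/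
import Mathlib


open Matrix

/-- The centering matrix `Ω_C = diag(1_C) − (1/|C|) 1_C 1_Cᵀ` associated with a cluster `C`. -/
noncomputable def Omega {m : ℕ} (C : Finset (Fin m)) : Matrix (Fin m) (Fin m) ℝ :=
  Matrix.diagonal (fun i => if i ∈ C then (1 : ℝ) else 0) -
    (1 / (C.card : ℝ)) • Matrix.vecMulVec (fun i => if i ∈ C then (1 : ℝ) else 0)
      (fun i => if i ∈ C then (1 : ℝ) else 0)

/-- `P` is the Moore–Penrose pseudoinverse of `B`. -/
def IsMP {m : ℕ} (B P : Matrix (Fin m) (Fin m) ℝ) : Prop :=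
  B * P * B = B ∧ P * B * P = P ∧ (B * P)ᵀ = B * P ∧ (P * B)ᵀ = P * B

/-- The centering matrix is symmetric. -/
lemma Omega_transpose {m : ℕ} (C : Finset (Fin m)) : (Omega C)ᵀ = Omega C := by
  ext i j
  simp only [Omega, Matrix.transpose_apply, Matrix.sub_apply, Matrix.smul_apply,
    Matrix.diagonal_apply, Matrix.vecMulVec_apply, smul_eq_mul]
  by_cases h : i = j <;> by_cases hi : i ∈ C <;> by_cases hj : j ∈ C <;> simp [h, hi, hj, eq_comm]

/-- Under the `M`-orthogonality of difference vectors, `Ω_C M Ω_{C'} = 0`. -/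
lemma Omega_M_Omega_eq_zero {m : ℕ} (C C' : Finset (Fin m)) (hC : C.Nonempty)
    (hC' : C'.Nonempty) (M : Matrix (Fin m) (Fin m) ℝ)
    (horth : ∀ h ∈ C, ∀ k ∈ C, ∀ h' ∈ C', ∀ k' ∈ C',
      M h h' - M h k' - M k h' + M k k' = 0) :
    Omega C * M * Omega C' = 0 := by
  have hn : (C.card : ℝ) ≠ 0 := Nat.cast_ne_zero.2 (Finset.card_ne_zero_of_mem hC.choose_spec)
  have hn' : (C'.card : ℝ) ≠ 0 := Nat.cast_ne_zero.2 (Finset.card_ne_zero_of_mem hC'.choose_spec)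
  ext i j
  simp only [Omega, Matrix.mul_apply, Matrix.sub_apply, Matrix.smul_apply,
    Matrix.diagonal_apply, Matrix.vecMulVec_apply, smul_eq_mul, Matrix.zero_apply]
  by_cases hi : i ∈ C
  · by_cases hj : j ∈ C'
    · have step : ∀ b, (∑ a, ((if i = a then (if i ∈ C then (1:ℝ) else 0) else 0) -
            1 / (C.card:ℝ) * ((if i ∈ C then (1:ℝ) else 0) * (if a ∈ C then (1:ℝ) else 0))) * M a b)
          = M i b - (C.card:ℝ)⁻¹ * ∑ a ∈ C, M a b := by
        intro b
        simp only [hi, if_true, one_mul, sub_mul, ite_mul, one_div,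
          Finset.sum_sub_distrib, Finset.sum_ite_eq, Finset.mem_univ, if_true, zero_mul,
          mul_assoc]
        rw [← Finset.mul_sum]
        congr 1
        rw [← Finset.sum_filter]
        congr 1
        simp [Finset.filter_mem_eq_inter]
      simp only [step]
      have key : ∀ b ∈ C', ∀ a ∈ C, M a b = M i b + M a j - M i j := by
        intro b hb a ha
        have := horth i hi a ha j hj b hb
        linarith
      have hU : ∑ b ∈ C', ∑ a ∈ C, M a b
          = (C.card:ℝ) * (∑ b ∈ C', M i b) + (C'.card:ℝ) * (∑ a ∈ C, M a j)
            - (C.card:ℝ) * (C'.card:ℝ) * M i j := by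
        calc ∑ b ∈ C', ∑ a ∈ C, M a b
            = ∑ b ∈ C', ∑ a ∈ C, (M i b + M a j - M i j) :=
              Finset.sum_congr rfl (fun b hb => Finset.sum_congr rfl (fun a ha => key b hb a ha))
          _ = _ := by
              simp [Finset.sum_add_distrib, Finset.sum_sub_distrib, Finset.sum_comm,
                Finset.mul_sum, Finset.sum_mul]
              ring
      simp only [hj, if_true, mul_one, mul_sub, mul_ite, mul_zero, mul_one,
        Finset.sum_sub_distrib, Finset.sum_ite_eq', Finset.mem_univ, if_true, one_div]
      rw [Finset.sum_ite_mem, Finset.univ_inter, ← Finset.sum_mul,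
        Finset.sum_sub_distrib, ← Finset.mul_sum, hU]
      field_simp
      ring
    · simp [hj, Finset.sum_ite_eq, mul_comm, sub_mul, ite_mul, mul_ite]
  · simp [hi]

/-- If the difference vectors supported on two clusters are mutually
`M`-orthogonal (as happens for edge-disjoint clusters in a tree network), then
`E_r E_{r'} = 0`. -/
theorem Er_Erp_orthogonal (m : ℕ) (hm : 1 ≤ m)
    (C C' : Finset (Fin m)) (hC : C.Nonempty) (hC' : C'.Nonempty)
    (M : Matrix (Fin m) (Fin m) ℝ) (hM : M.PosDef)
    (P P' : Matrix (Fin m) (Fin m) ℝ)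
    (hP : IsMP (Omega C * M * Omega C) P)
    (hP' : IsMP (Omega C' * M * Omega C') P')
    (horth : ∀ h ∈ C, ∀ k ∈ C, ∀ h' ∈ C', ∀ k' ∈ C',
      ((Pi.single h 1 : Fin m → ℝ) - Pi.single k 1) ⬝ᵥ
          M.mulVec ((Pi.single h' 1 : Fin m → ℝ) - Pi.single k' 1) = 0) :
    (P * M) * (P' * M) = 0 := by
  have horth' : ∀ h ∈ C, ∀ k ∈ C, ∀ h' ∈ C', ∀ k' ∈ C',
      M h h' - M h k' - M k h' + M k k' = 0 := by
    intro h hh k hk h' hh' k' hk'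
    have h0 := horth h hh k hk h' hh' k' hk'
    have : ((Pi.single h 1 : Fin m → ℝ) - Pi.single k 1) ⬝ᵥ
        M.mulVec ((Pi.single h' 1 : Fin m → ℝ) - Pi.single k' 1)
        = M h h' - M h k' - M k h' + M k k' := by
      simp [Matrix.mulVec, dotProduct, Pi.single_apply, sub_mul, mul_sub, ite_mul, mul_ite,
        Finset.sum_sub_distrib, Finset.sum_ite_eq, Finset.mem_univ]
      ring
    rw [this] at h0
    exact h0
  have key : Omega C * M * Omega C' = 0 :=
    Omega_M_Omega_eq_zero C C' hC hC' M horth'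
  have hMT : Mᵀ = M := hM.isHermitian.eq
  have hBT : (Omega C * M * Omega C)ᵀ = Omega C * M * Omega C := by
    simp [Matrix.transpose_mul, Omega_transpose, hMT, Matrix.mul_assoc]
  have hBT' : (Omega C' * M * Omega C')ᵀ = Omega C' * M * Omega C' := by
    simp [Matrix.transpose_mul, Omega_transpose, hMT, Matrix.mul_assoc]
  obtain ⟨h1, h2, h3, h4⟩ := hP
  obtain ⟨h1', h2', h3', h4'⟩ := hP'
  have hPeq : P = P * Pᵀ * (Omega C * M * Omega C) := by
    conv_lhs => rw [← h2]
    rw [Matrix.mul_assoc, ← h3, Matrix.transpose_mul, hBT, ← Matrix.mul_assoc]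
  have hP'eq : P' = (Omega C' * M * Omega C') * P'ᵀ * P' := by
    conv_lhs => rw [← h2']
    rw [← h4', Matrix.transpose_mul, hBT']
  have keyZ : ∀ Z : Matrix (Fin m) (Fin m) ℝ, Omega C * (M * (Omega C' * Z)) = 0 := by
    intro Z
    rw [← Matrix.mul_assoc, ← Matrix.mul_assoc, key, Matrix.zero_mul]
  conv_lhs => rw [hPeq, hP'eq]
  simp only [Matrix.mul_assoc]
  rw [keyZ]
  simp
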